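/- Assume the network graph is connected and acyclic (ker A = {0} and ker Aᵀ = span{1_{n+m}}) and Σ_{i=1}^{n+m} P_i = 0, and set p := (AᵀA)⁻¹ Aᵀ P and ψ(v) := diag(h(v))⁻¹ D⁻¹ p for v ∈ ℝⁿ with positive entries. Then for every θ ∈ ℝ^{n+m} and every v ∈ ℝⁿ with strictly positive entries, with V_i := (V_L*)_i v_i for load buses and V_i := (V_G)_{i−n} for generator buses, the active power flow equations P_i = Σ_{j=1}^{n+m} V_i V_j B_{ij} sin(θ_i − θ_j) hold at every bus i if and only if sin((Aᵀθ)_e) = ψ(v)_e for every edge e ∈ E. -/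

import Mathlib

open Matrix BigOperators

noncomputable section

/-- Buses `a` and `b` are joined by a branch. -/
def busJoined {n m E : ℕ} (src tgt : Fin E → Fin n ⊕ Fin m)
    (a b : Fin n ⊕ Fin m) : Prop :=
  ∃ e : Fin E, (src e = a ∧ tgt e = b) ∨ (src e = b ∧ tgt e = a)

/-- The load–load block of the susceptance matrix. -/
def BLL {n m : ℕ} (B : Matrix (Fin n ⊕ Fin m) (Fin n ⊕ Fin m) ℝ) :
    Matrix (Fin n) (Fin n) ℝ :=
  Matrix.of fun i j => B (Sum.inl i) (Sum.inl j)

/-- The load–generator block of the susceptance matrix. -/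
def BLG {n m : ℕ} (B : Matrix (Fin n ⊕ Fin m) (Fin n ⊕ Fin m) ℝ) :
    Matrix (Fin n) (Fin m) ℝ :=
  Matrix.of fun i j => B (Sum.inl i) (Sum.inr j)

/-- Open-circuit load voltages  V_L* = −B_LL⁻¹ B_LG V_G. -/
def VLstar {n m : ℕ} (B : Matrix (Fin n ⊕ Fin m) (Fin n ⊕ Fin m) ℝ)
    (VG : Fin m → ℝ) : Fin n → ℝ :=
  -((BLL B)⁻¹.mulVec ((BLG B).mulVec VG))

/-- Open-circuit voltage profile on all buses: V_L* on loads, V_G on generators. -/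
def Vstar {n m : ℕ} (B : Matrix (Fin n ⊕ Fin m) (Fin n ⊕ Fin m) ℝ)
    (VG : Fin m → ℝ) : Fin n ⊕ Fin m → ℝ :=
  Sum.elim (VLstar B VG) VG

/-- Oriented node–edge incidence matrix: +1 at the source, −1 at the target. -/
def incA {n m E : ℕ} (src tgt : Fin E → Fin n ⊕ Fin m) :
    Matrix (Fin n ⊕ Fin m) (Fin E) ℝ :=
  Matrix.of fun a e => if src e = a then 1 else if tgt e = a then -1 else 0

/-- Load-bus rows of the unsigned incidence matrix |A|_L. -/
def absAL {n m E : ℕ} (src tgt : Fin E → Fin n ⊕ Fin m) :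
    Matrix (Fin n) (Fin E) ℝ :=
  Matrix.of fun i e => |incA src tgt (Sum.inl i) e|

/-- Branch stiffness matrix D = diag(V*_{s(e)} V*_{t(e)} B_{s(e)t(e)}). -/
def Dmat {n m E : ℕ} (B : Matrix (Fin n ⊕ Fin m) (Fin n ⊕ Fin m) ℝ)
    (VG : Fin m → ℝ) (src tgt : Fin E → Fin n ⊕ Fin m) :
    Matrix (Fin E) (Fin E) ℝ :=
  Matrix.diagonal fun e => Vstar B VG (src e) * Vstar B VG (tgt e) * B (src e) (tgt e)

/-- Nodal stiffness matrix S = ¼ diag(V_L*) B_LL diag(V_L*). -/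
def Smat {n m : ℕ} (B : Matrix (Fin n ⊕ Fin m) (Fin n ⊕ Fin m) ℝ)
    (VG : Fin m → ℝ) : Matrix (Fin n) (Fin n) ℝ :=
  (4⁻¹ : ℝ) • (Matrix.diagonal (VLstar B VG) * BLL B * Matrix.diagonal (VLstar B VG))

/-- The edge nonlinearity h(v): v_s v_t on load–load branches, v_t on
generator–load branches, and 1 on generator–generator branches. -/
def hvec {n m E : ℕ} (src tgt : Fin E → Fin n ⊕ Fin m) (v : Fin n → ℝ) :
    Fin E → ℝ := fun e =>
  match src e, tgt e with
  | Sum.inl i, Sum.inl j => v i * v j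
  | Sum.inr _, Sum.inl j => v j
  | Sum.inl i, Sum.inr _ => v i
  | Sum.inr _, Sum.inr _ => 1

/-- Branch active power flows p = (AᵀA)⁻¹AᵀP for a radial network. -/
def pflow {n m E : ℕ} (src tgt : Fin E → Fin n ⊕ Fin m)
    (P : Fin n ⊕ Fin m → ℝ) : Fin E → ℝ :=
  (((incA src tgt)ᵀ * incA src tgt)⁻¹ * (incA src tgt)ᵀ).mulVec P

/-- ψ(v) = diag(h(v))⁻¹ D⁻¹ p. -/
def psif {n m E : ℕ} (B : Matrix (Fin n ⊕ Fin m) (Fin n ⊕ Fin m) ℝ)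
    (VG : Fin m → ℝ) (src tgt : Fin E → Fin n ⊕ Fin m)
    (P : Fin n ⊕ Fin m → ℝ) (v : Fin n → ℝ) : Fin E → ℝ :=
  ((Matrix.diagonal (hvec src tgt v))⁻¹ * (Dmat B VG src tgt)⁻¹).mulVec (pflow src tgt P)

/-- u(v)_e = 1 − √(1 − ψ(v)_e²). -/
def uvec {n m E : ℕ} (B : Matrix (Fin n ⊕ Fin m) (Fin n ⊕ Fin m) ℝ)
    (VG : Fin m → ℝ) (src tgt : Fin E → Fin n ⊕ Fin m)
    (P : Fin n ⊕ Fin m → ℝ) (v : Fin n → ℝ) : Fin E → ℝ :=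
  fun e => 1 - Real.sqrt (1 - (psif B VG src tgt P v e) ^ 2)

/-- The fixed-point power flow map
f(v) = 1 − ¼S⁻¹ diag(Q_L) diag(v)⁻¹ 1 + ¼S⁻¹ diag(v)⁻¹ |A|_L D diag(h(v)) u(v). -/
def fppf {n m E : ℕ} (B : Matrix (Fin n ⊕ Fin m) (Fin n ⊕ Fin m) ℝ)
    (VG : Fin m → ℝ) (src tgt : Fin E → Fin n ⊕ Fin m)
    (P : Fin n ⊕ Fin m → ℝ) (QL : Fin n → ℝ) (v : Fin n → ℝ) : Fin n → ℝ :=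
  (fun _ => (1 : ℝ))
    - (4⁻¹ : ℝ) •
      (((Smat B VG)⁻¹ * Matrix.diagonal QL * (Matrix.diagonal v)⁻¹).mulVec fun _ => (1 : ℝ))
    + (4⁻¹ : ℝ) •
      (((Smat B VG)⁻¹ * (Matrix.diagonal v)⁻¹ * absAL src tgt * Dmat B VG src tgt *
          Matrix.diagonal (hvec src tgt v)).mulVec (uvec B VG src tgt P v))

end

/-!
On a tree the incidence matrix `A` is injective and `ker Aᵀ` consists of the constants, so a
balanced injection vector `P` has exactly one preimage under `A`, namely `p = (AᵀA)⁻¹AᵀP`.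
The nodal sums `∑_b V_a V_b B_ab sin(θ_a - θ_b)` are `A` applied to the branch flows
`V_s V_t B_st sin(θ_s - θ_t)`, so the power flow equations say that these branch flows
equal `p`. As `V_s V_t B_st = D_e h(v)_e`, dividing by this branch stiffness gives
`sin((Aᵀθ)_e) = ψ(v)_e`.
The division is legitimate because `V_L* > 0`: `-B_LL` is a positive definite Z-matrix, hence
inverse-nonnegative, so `V* ≥ 0`, and a zero of `V*` would spread along branches to a generator.
-/

theorem Matrix.PosDef.nonneg_of_nonneg_mulVec {ι : Type*} [Fintype ι] {M : Matrix ι ι ℝ}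
    (hM : M.PosDef) (hoff : ∀ i j, i ≠ j → M i j ≤ 0) {u : ι → ℝ} (hMu : 0 ≤ M *ᵥ u) :
    0 ≤ u := by
  set x : ι → ℝ := fun i => |u i|
  -- `|u|` lowers the quadratic form of a Z-matrix and `(|u| - u) ⬝ᵥ M u ≥ 0`, which together
  -- force `(|u| - u) ⬝ᵥ M (|u| - u) ≤ 0`
  have hquad : x ⬝ᵥ M *ᵥ x ≤ u ⬝ᵥ M *ᵥ u := by
    simp only [mulVec, dotProduct, Finset.mul_sum]
    refine Finset.sum_le_sum fun i _ => Finset.sum_le_sum fun j _ => ?_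
    rcases eq_or_ne i j with rfl | hij
    · exact le_of_eq (by linear_combination M i i * abs_mul_abs_self (u i))
    · have hprod : u i * u j ≤ x i * x j := by
        simp only [x, ← abs_mul]; exact le_abs_self _
      nlinarith [hoff i j hij]
  have hsymm : u ⬝ᵥ M *ᵥ x = x ⬝ᵥ M *ᵥ u := by
    have hT : Mᵀ = M := by
      simpa only [conjTranspose_eq_transpose_of_trivial] using hM.isHermitian.eq
    rw [dotProduct_mulVec, ← mulVec_transpose, hT, dotProduct_comm]
  have hcross : 0 ≤ (x - u) ⬝ᵥ M *ᵥ u :=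
    dotProduct_nonneg_of_nonneg (sub_nonneg.mpr fun i => le_abs_self (u i)) hMu
  have hxu : x - u = 0 := by
    by_contra hxu
    have hpos := hM.dotProduct_mulVec_pos hxu
    rw [star_trivial, mulVec_sub, dotProduct_sub, sub_dotProduct, sub_dotProduct,
      hsymm] at hpos
    rw [sub_dotProduct] at hcross
    linarith
  rw [← sub_eq_zero.mp hxu]
  exact fun i => abs_nonneg (u i)

theorem Matrix.apply_eq_zero_of_mulVec_apply_eq_zero {ι : Type*} [Fintype ι]
    {M : Matrix ι ι ℝ} (hoff : ∀ i j, i ≠ j → 0 ≤ M i j) {x : ι → ℝ} (hx : 0 ≤ x)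
    {i j : ι} (hxi : x i = 0) (hMx : (M *ᵥ x) i = 0) (hij : 0 < M i j) : x j = 0 := by
  have hterm : ∀ k, 0 ≤ M i k * x k := fun k => by
    rcases eq_or_ne i k with rfl | hik
    · rw [hxi, mul_zero]
    · exact mul_nonneg (hoff i k hik) (hx k)
  have hj := (Finset.sum_eq_zero_iff_of_nonneg fun k _ => hterm k).mp hMx j
    (Finset.mem_univ j)
  exact (mul_eq_zero.mp hj).resolve_left hij.ne'

theorem Matrix.inv_diagonal_of_ne_zero {ι K : Type*} [Fintype ι] [DecidableEq ι] [Field K]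
    {d : ι → K} (hd : ∀ i, d i ≠ 0) : (diagonal d)⁻¹ = diagonal d⁻¹ :=
  inv_eq_left_inv <| by
    rw [diagonal_mul_diagonal, ← diagonal_one]
    exact congrArg diagonal (funext fun i => inv_mul_cancel₀ (hd i))

section Incidence

variable {n m E : ℕ} {src tgt : Fin E → Fin n ⊕ Fin m}

lemma incA_transpose_mulVec_apply (hne : ∀ e, src e ≠ tgt e) (θ : Fin n ⊕ Fin m → ℝ)
    (e : Fin E) : ((incA src tgt)ᵀ *ᵥ θ) e = θ (src e) - θ (tgt e) := by
  have hterm : ∀ a, (incA src tgt)ᵀ e a * θ a =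
      (if src e = a then θ a else 0) - (if tgt e = a then θ a else 0) := by
    intro a
    simp only [incA, transpose_apply, of_apply]
    split_ifs with hs ht <;> first | exact absurd (hs.trans ht.symm) (hne e) | ring
  simp only [mulVec, dotProduct, hterm, Finset.sum_sub_distrib, Finset.sum_ite_eq,
    Finset.mem_univ, if_true]

lemma sum_incA_mulVec (hne : ∀ e, src e ≠ tgt e) (q : Fin E → ℝ) :
    ∑ a, (incA src tgt *ᵥ q) a = 0 := by
  have hcol : (incA src tgt)ᵀ *ᵥ (fun _ => 1) = 0 := by
    ext e; simp [incA_transpose_mulVec_apply hne]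
  calc ∑ a, (incA src tgt *ᵥ q) a = (fun _ => (1 : ℝ)) ⬝ᵥ (incA src tgt *ᵥ q) := by
        simp [dotProduct]
    _ = 0 := by rw [dotProduct_mulVec, ← mulVec_transpose, hcol, zero_dotProduct]

lemma eq_const_of_forall_edge (hne : ∀ e, src e ≠ tgt e)
    (hconn : ∀ x : Fin n ⊕ Fin m → ℝ,
      (incA src tgt)ᵀ *ᵥ x = 0 ↔ ∃ c : ℝ, x = fun _ => c)
    {φ : Fin n ⊕ Fin m → ℝ} (hφ : ∀ e, φ (src e) = φ (tgt e)) :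
    ∃ c : ℝ, φ = fun _ => c :=
  (hconn φ).mp <| funext fun e => by
    rw [incA_transpose_mulVec_apply hne, hφ, sub_self, Pi.zero_apply]

lemma isUnit_det_incA_transpose_mul_self
    (hacyclic : ∀ p : Fin E → ℝ, incA src tgt *ᵥ p = 0 → p = 0) :
    IsUnit ((incA src tgt)ᵀ * incA src tgt).det := by
  refine isUnit_iff_ne_zero.mpr fun hdet => ?_
  obtain ⟨y, hy, hGy⟩ := exists_mulVec_eq_zero_iff.mpr hdet
  have hAy : incA src tgt *ᵥ y ⬝ᵥ incA src tgt *ᵥ y = 0 := by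
    rw [dotProduct_mulVec, ← mulVec_transpose, mulVec_mulVec, hGy, zero_dotProduct]
  exact hy (hacyclic y (dotProduct_self_eq_zero.mp hAy))

lemma incA_mulVec_pflow [Nonempty (Fin n ⊕ Fin m)] (hne : ∀ e, src e ≠ tgt e)
    (hacyclic : ∀ p : Fin E → ℝ, incA src tgt *ᵥ p = 0 → p = 0)
    (hconn : ∀ x : Fin n ⊕ Fin m → ℝ,
      (incA src tgt)ᵀ *ᵥ x = 0 ↔ ∃ c : ℝ, x = fun _ => c)
    {P : Fin n ⊕ Fin m → ℝ} (hP : ∑ a, P a = 0) :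
    incA src tgt *ᵥ pflow src tgt P = P := by
  set A := incA src tgt
  have hnormal : Aᵀ *ᵥ (A *ᵥ pflow src tgt P - P) = 0 := by
    rw [mulVec_sub, pflow, mulVec_mulVec, mulVec_mulVec, ← Matrix.mul_assoc,
      mul_nonsing_inv _ (isUnit_det_incA_transpose_mul_self hacyclic), Matrix.one_mul,
      sub_self]
  obtain ⟨c, hc⟩ := (hconn _).mp hnormal
  have hsum : ∑ a, (A *ᵥ pflow src tgt P - P) a = 0 := by
    simp only [Pi.sub_apply]
    rw [Finset.sum_sub_distrib, sum_incA_mulVec hne, hP, sub_zero]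
  rw [hc, Finset.sum_const, Finset.card_univ, nsmul_eq_mul,
    mul_eq_zero_iff_left (Nat.cast_ne_zero.mpr Fintype.card_ne_zero)] at hsum
  rw [← sub_eq_zero, hc, hsum]
  rfl

lemma sum_eq_incA_mulVec (hne : ∀ e, src e ≠ tgt e)
    (huniq : ∀ e f : Fin E,
      ((src e = src f ∧ tgt e = tgt f) ∨ (src e = tgt f ∧ tgt e = src f)) → e = f)
    {f : Fin n ⊕ Fin m → Fin n ⊕ Fin m → ℝ} (hanti : ∀ a b, f b a = -f a b)
    (hzero : ∀ a b, a ≠ b → ¬busJoined src tgt a b → f a b = 0) (a : Fin n ⊕ Fin m) :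
    ∑ b, f a b = (incA src tgt *ᵥ fun e => f (src e) (tgt e)) a := by
  have hsplit : ∀ b, f a b = ∑ e,
      if (src e = a ∧ tgt e = b) ∨ (src e = b ∧ tgt e = a) then f a b else 0 := by
    intro b
    by_cases hj : busJoined src tgt a b
    · obtain ⟨e₀, he₀⟩ := hj
      rw [Finset.sum_eq_single e₀ (fun e _ he => if_neg fun h => he (huniq e e₀ ?_))
        (by simp), if_pos he₀]
      rcases h with ⟨h1, h2⟩ | ⟨h1, h2⟩ <;> rcases he₀ with ⟨h3, h4⟩ | ⟨h3, h4⟩ <;>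
        simp only [h1, h2, h3, h4, and_true, true_or, or_true]
    · rw [Finset.sum_eq_zero fun e _ => if_neg fun h => hj ⟨e, h⟩]
      by_cases hab : a = b
      · subst hab; linarith [hanti a a]
      · exact hzero a b hab hj
  rw [Finset.sum_congr rfl fun b _ => hsplit b, Finset.sum_comm]
  simp only [mulVec, dotProduct, incA, of_apply]
  refine Finset.sum_congr rfl fun e _ => ?_
  split_ifs with hs ht
  · subst hs; simp [(hne e).symm]
  · subst ht; simp [hs, hanti (src e)]
  · simp [hs, ht]

end Incidence

section Voltage

variable {n m : ℕ} {B : Matrix (Fin n ⊕ Fin m) (Fin n ⊕ Fin m) ℝ} {VG : Fin m → ℝ}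

lemma BLL_mulVec_VLstar (hBLL : (-(BLL B)).PosDef) :
    BLL B *ᵥ VLstar B VG = -(BLG B *ᵥ VG) := by
  have hdet : IsUnit (BLL B).det := by
    simpa only [neg_neg, isUnit_iff_isUnit_det] using hBLL.isUnit.neg
  rw [VLstar, mulVec_neg, mulVec_mulVec, mul_nonsing_inv _ hdet, one_mulVec]

lemma mulVec_Vstar_inl (hBLL : (-(BLL B)).PosDef) (i : Fin n) :
    (B *ᵥ Vstar B VG) (Sum.inl i) = 0 := by
  have hi := congrFun (BLL_mulVec_VLstar (VG := VG) hBLL) i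
  simp only [mulVec, dotProduct, BLL, BLG, of_apply, Pi.neg_apply] at hi
  simp only [mulVec, dotProduct, Fintype.sum_sum_type, Vstar, Sum.elim_inl, Sum.elim_inr]
  linarith

variable (hBnn : ∀ a b, a ≠ b → 0 ≤ B a b) (hBLL : (-(BLL B)).PosDef) (hVG : ∀ j, 0 < VG j)
include hBnn hBLL hVG

lemma Vstar_nonneg : 0 ≤ Vstar B VG := by
  have hLL : ∀ i j, i ≠ j → (-(BLL B)) i j ≤ 0 := fun i j hij => by
    simpa [BLL] using hBnn _ _ (Sum.inl_injective.ne hij)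
  have hLG : 0 ≤ -(BLL B) *ᵥ VLstar B VG := by
    rw [neg_mulVec, BLL_mulVec_VLstar hBLL, neg_neg]
    intro i
    show 0 ≤ ∑ k, B (Sum.inl i) (Sum.inr k) * VG k
    exact Finset.sum_nonneg fun k _ => mul_nonneg (hBnn _ _ Sum.inl_ne_inr) (hVG k).le
  rintro (i | k)
  · exact hBLL.nonneg_of_nonneg_mulVec hLL hLG i
  · exact (hVG k).le

lemma Vstar_eq_zero_of_busJoined {E : ℕ} {src tgt : Fin E → Fin n ⊕ Fin m}
    (hBpos : ∀ a b, busJoined src tgt a b → 0 < B a b) {a b : Fin n ⊕ Fin m}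
    (hab : busJoined src tgt a b) (ha : Vstar B VG a = 0) : Vstar B VG b = 0 := by
  rcases a with i | k
  · exact apply_eq_zero_of_mulVec_apply_eq_zero hBnn (Vstar_nonneg hBnn hBLL hVG) ha
      (mulVec_Vstar_inl hBLL i) (hBpos _ _ hab)
  · exact absurd ha (hVG k).ne'

lemma Vstar_pos [Nonempty (Fin m)] {E : ℕ} {src tgt : Fin E → Fin n ⊕ Fin m}
    (hne : ∀ e, src e ≠ tgt e) (hBpos : ∀ a b, busJoined src tgt a b → 0 < B a b)
    (hconn : ∀ x : Fin n ⊕ Fin m → ℝ,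
      (incA src tgt)ᵀ *ᵥ x = 0 ↔ ∃ c : ℝ, x = fun _ => c)
    (a : Fin n ⊕ Fin m) : 0 < Vstar B VG a := by
  -- the zero set of `V*` is a union of connected components without generators
  set φ : Fin n ⊕ Fin m → ℝ := fun a => if Vstar B VG a = 0 then 0 else 1
  have hedge : ∀ e, φ (src e) = φ (tgt e) := fun e => by
    have hfwd := Vstar_eq_zero_of_busJoined hBnn hBLL hVG hBpos ⟨e, Or.inl ⟨rfl, rfl⟩⟩
    have hbwd := Vstar_eq_zero_of_busJoined hBnn hBLL hVG hBpos ⟨e, Or.inr ⟨rfl, rfl⟩⟩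
    by_cases hs : Vstar B VG (src e) = 0
    · simp [φ, hs, hfwd hs]
    · simp [φ, hs, mt hbwd hs]
  obtain ⟨c, hc⟩ := eq_const_of_forall_edge hne hconn hedge
  obtain ⟨j⟩ := ‹Nonempty (Fin m)›
  have hφ : φ a = φ (Sum.inr j) := by rw [hc]
  refine lt_of_le_of_ne (Vstar_nonneg hBnn hBLL hVG a) (Ne.symm fun ha => ?_)
  simp only [φ, ha, if_true] at hφ
  simp [Vstar, (hVG j).ne'] at hφ

end Voltage

section Edge

variable {n m E : ℕ} {src tgt : Fin E → Fin n ⊕ Fin m}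

lemma hvec_pos {v : Fin n → ℝ} (hv : ∀ i, 0 < v i) (e : Fin E) : 0 < hvec src tgt v e := by
  unfold hvec
  split
  all_goals first | exact mul_pos (hv _) (hv _) | exact hv _ | exact one_pos

lemma Vstar_mul_hvec (B : Matrix (Fin n ⊕ Fin m) (Fin n ⊕ Fin m) ℝ) (VG : Fin m → ℝ)
    (v : Fin n → ℝ) {V : Fin n ⊕ Fin m → ℝ}
    (hV : V = Sum.elim (fun k => VLstar B VG k * v k) VG) (e : Fin E) :
    Vstar B VG (src e) * Vstar B VG (tgt e) * B (src e) (tgt e) * hvec src tgt v e =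
      V (src e) * V (tgt e) * B (src e) (tgt e) := by
  subst hV
  unfold hvec
  split <;> simp only [Vstar, Sum.elim_inl, Sum.elim_inr, *] <;> ring

lemma psif_apply {B : Matrix (Fin n ⊕ Fin m) (Fin n ⊕ Fin m) ℝ} {VG : Fin m → ℝ}
    {v : Fin n → ℝ}
    (hD : ∀ e, Vstar B VG (src e) * Vstar B VG (tgt e) * B (src e) (tgt e) ≠ 0)
    (hh : ∀ e, hvec src tgt v e ≠ 0) (P : Fin n ⊕ Fin m → ℝ) (e : Fin E) :
    psif B VG src tgt P v e = pflow src tgt P e /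
      (Vstar B VG (src e) * Vstar B VG (tgt e) * B (src e) (tgt e) * hvec src tgt v e) := by
  rw [psif, Dmat, inv_diagonal_of_ne_zero hh, inv_diagonal_of_ne_zero hD,
    diagonal_mul_diagonal, mulVec_diagonal, Pi.inv_apply, Pi.inv_apply]
  ring

end Edge

theorem stmt14_general {n m E : ℕ} (hm : 0 < m)
    (B : Matrix (Fin n ⊕ Fin m) (Fin n ⊕ Fin m) ℝ)
    (VG : Fin m → ℝ)
    (src tgt : Fin E → Fin n ⊕ Fin m)
    (hsym : Bᵀ = B)
    (hne : ∀ e : Fin E, src e ≠ tgt e)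
    (huniq : ∀ e f : Fin E,
      ((src e = src f ∧ tgt e = tgt f) ∨ (src e = tgt f ∧ tgt e = src f)) → e = f)
    (hBpos : ∀ a b : Fin n ⊕ Fin m, busJoined src tgt a b → 0 < B a b)
    (hBzero : ∀ a b : Fin n ⊕ Fin m, a ≠ b → ¬ busJoined src tgt a b → B a b = 0)
    (hBLL : (-(BLL B)).PosDef)
    (hVG : ∀ j, 0 < VG j)
    (hacyclic : ∀ p : Fin E → ℝ, (incA src tgt).mulVec p = 0 → p = 0)
    (hconn : ∀ x : Fin n ⊕ Fin m → ℝ,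
      (incA src tgt)ᵀ.mulVec x = 0 ↔ ∃ c : ℝ, x = fun _ => c)
    (P : Fin n ⊕ Fin m → ℝ)
    (hP : ∑ a, P a = 0) :
    ∀ (θ : Fin n ⊕ Fin m → ℝ) (v : Fin n → ℝ), (∀ i, 0 < v i) →
      ∀ V : Fin n ⊕ Fin m → ℝ,
        V = Sum.elim (fun k => VLstar B VG k * v k) VG →
        ((∀ a : Fin n ⊕ Fin m,
            P a = ∑ b : Fin n ⊕ Fin m, V a * V b * B a b * Real.sin (θ a - θ b))
          ↔ ∀ e : Fin E,
              Real.sin ((incA src tgt)ᵀ.mulVec θ e) = psif B VG src tgt P v e) := by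
  intro θ v hv V hV
  have : Nonempty (Fin m) := ⟨⟨0, hm⟩⟩
  have hBnn : ∀ a b, a ≠ b → 0 ≤ B a b := fun a b hab => by
    by_cases hj : busJoined src tgt a b
    exacts [(hBpos a b hj).le, (hBzero a b hab hj).ge]
  have hVstar := Vstar_pos hBnn hBLL hVG hne hBpos hconn
  have hstiff : ∀ e, 0 < Vstar B VG (src e) * Vstar B VG (tgt e) * B (src e) (tgt e) :=
    fun e => mul_pos (mul_pos (hVstar _) (hVstar _)) (hBpos _ _ ⟨e, Or.inl ⟨rfl, rfl⟩⟩)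
  set w : Fin E → ℝ :=
    fun e => V (src e) * V (tgt e) * B (src e) (tgt e) * Real.sin (θ (src e) - θ (tgt e))
  have hnodal : ∀ a, ∑ b, V a * V b * B a b * Real.sin (θ a - θ b) = (incA src tgt *ᵥ w) a :=
    sum_eq_incA_mulVec hne huniq
      (fun a b => by rw [← neg_sub, Real.sin_neg, ← transpose_apply B, hsym]; ring)
      (fun a b hab hj => by rw [hBzero a b hab hj]; ring)
  calc (∀ a, P a = ∑ b, V a * V b * B a b * Real.sin (θ a - θ b))
      ↔ incA src tgt *ᵥ w = incA src tgt *ᵥ pflow src tgt P := by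
        rw [incA_mulVec_pflow hne hacyclic hconn hP, funext_iff]
        simp only [hnodal, eq_comm]
    _ ↔ w = pflow src tgt P := by
        refine ⟨fun h => sub_eq_zero.mp (hacyclic _ ?_), congrArg _⟩
        rw [mulVec_sub, h, sub_self]
    _ ↔ _ := by
        refine funext_iff.trans (forall_congr' fun e => ?_)
        rw [psif_apply (fun e => (hstiff e).ne') (fun e => (hvec_pos hv e).ne'),
          incA_transpose_mulVec_apply hne,
          eq_div_iff (mul_pos (hstiff e) (hvec_pos hv e)).ne',
          Vstar_mul_hvec B VG v hV, mul_comm]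

/-- Active power reformulation for radial networks (Corollary 1 of the paper):
for a connected acyclic network with balanced injections P, and for any angles θ
and positive scaled voltages v (with V_L = diag(V_L*) v), the active power flow
equations hold at every bus iff sin((Aᵀθ)_e) = ψ(v)_e on every branch, where
ψ(v) = diag(h(v))⁻¹ D⁻¹ p and p = (AᵀA)⁻¹AᵀP. -/
theorem stmt14 {n m E : ℕ} (hn : 0 < n) (hm : 0 < m)
    (B : Matrix (Fin n ⊕ Fin m) (Fin n ⊕ Fin m) ℝ)
    (VG : Fin m → ℝ)
    (src tgt : Fin E → Fin n ⊕ Fin m)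
    (hsym : Bᵀ = B)
    (hne : ∀ e : Fin E, src e ≠ tgt e)
    (huniq : ∀ e f : Fin E,
      ((src e = src f ∧ tgt e = tgt f) ∨ (src e = tgt f ∧ tgt e = src f)) → e = f)
    (horient : ∀ (e : Fin E) (i : Fin n) (j : Fin m),
      ¬(src e = Sum.inl i ∧ tgt e = Sum.inr j))
    (hBpos : ∀ a b : Fin n ⊕ Fin m, busJoined src tgt a b → 0 < B a b)
    (hBzero : ∀ a b : Fin n ⊕ Fin m, a ≠ b → ¬ busJoined src tgt a b → B a b = 0)
    (hBLL : (-(BLL B)).PosDef)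
    (hVG : ∀ j, 0 < VG j)
    (hacyclic : ∀ p : Fin E → ℝ, (incA src tgt).mulVec p = 0 → p = 0)
    (hconn : ∀ x : Fin n ⊕ Fin m → ℝ,
      (incA src tgt)ᵀ.mulVec x = 0 ↔ ∃ c : ℝ, x = fun _ => c)
    (P : Fin n ⊕ Fin m → ℝ)
    (hP : ∑ a, P a = 0) :
    ∀ (θ : Fin n ⊕ Fin m → ℝ) (v : Fin n → ℝ), (∀ i, 0 < v i) →
      ∀ V : Fin n ⊕ Fin m → ℝ,
        V = Sum.elim (fun k => VLstar B VG k * v k) VG →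
        ((∀ a : Fin n ⊕ Fin m,
            P a = ∑ b : Fin n ⊕ Fin m, V a * V b * B a b * Real.sin (θ a - θ b))
          ↔ ∀ e : Fin E,
              Real.sin ((incA src tgt)ᵀ.mulVec θ e) = psif B VG src tgt P v e) :=
  stmt14_general hm B VG src tgt hsym hne huniq hBpos hBzero hBLL hVG hacyclic hconn P hP
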